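/- arXiv:1807.01070 — 2 statements merged into one kernel-verified Lean document; each statement's English description precedes it below -/
import Mathlib

section
/- In the bipartite random graph G(n, n, 1/√n) with n even, for every constant δ > 0, with probability at least 1 − (n−1)·2·exp(−δ²n/30), the number of pairs {a1, a2} of distinct vertices of A having at least 5 common neighbors in B is at most (1+δ)·n²/10. -/
/-!
Call a pair of left vertices bad if it has at least 5 common neighbours. For `r : Fin n` the
involution `k ↦ r - k` pairs up the vertices, and every pair `{i, j}` occurs for `r = i + j`, so
it is enough that each of these `n` involutions has at most `(1 + δ) n / 10` bad pairs. Bad events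
of distinct pairs of one involution depend on disjoint sets of edges, so they are independent, and
by Markov each has probability at most `E[#common neighbours] / 5 = n p² / 5 = 1 / 5`. Hoeffding's
inequality over the at most `n / 2` pairs gives a failure probability `exp (-δ² n / 25)` per
involution, and the union bound over `n ≤ 2 (n - 1)` involutions concludes.
-/

open MeasureTheory

/-- The bipartite random graph `G(n, n, p)`: each potential edge `(a, b) ∈ Fin n × Fin n`
is present (`true`) independently with probability `p`. -/
noncomputable def bipRandomGraph (n : ℕ) (p : ENNReal) (hp : p ≤ 1) :
    Measure ((Fin n × Fin n) → Bool) :=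
  Measure.pi fun _ => (PMF.bernoulli p.toNNReal
    (by simpa using ENNReal.toNNReal_mono ENNReal.one_ne_top hp)).toMeasure

lemma ofReal_one_div_sqrt_le_one (n : ℕ) : ENNReal.ofReal (1 / Real.sqrt n) ≤ 1 := by
  rcases Nat.eq_zero_or_pos n with h | h
  · subst h; simp
  · rw [ENNReal.ofReal_le_one,
      div_le_one (Real.sqrt_pos.mpr (by exact_mod_cast h))]
    exact Real.one_le_sqrt.mpr (by exact_mod_cast h)

/-- The number of pairs `{a1, a2}` of distinct left vertices having at least 5 common
neighbors in the right part, in the bipartite graph described by `ω`. -/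
def badPairCount (n : ℕ) (ω : (Fin n × Fin n) → Bool) : ℕ :=
  ((Finset.univ : Finset (Finset (Fin n))).filter fun P =>
    P.card = 2 ∧
      5 ≤ ((Finset.univ : Finset (Fin n)).filter fun b => ∀ a ∈ P, ω (a, b) = true).card).card

open ProbabilityTheory Finset

namespace ProbabilityTheory

lemma HasSubgaussianMGF.mono {Ω : Type*} [MeasurableSpace Ω] {μ : Measure Ω} {X : Ω → ℝ}
    {c c' : NNReal} (h : HasSubgaussianMGF X c μ) (hc : c ≤ c') : HasSubgaussianMGF X c' μ :=
  ⟨h.integrable_exp_mul, fun t ↦ (h.mgf_le t).trans (Real.exp_le_exp.2 (by gcongr))⟩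

variable {ι κ : Type*} {X : ι → Type*} [∀ i, MeasurableSpace (X i)] (μ : ∀ i, Measure (X i))
  [∀ i, IsProbabilityMeasure (μ i)]

theorem iIndepFun_infinitePi_restrict_fiber (c : ι → κ) :
    iIndepFun (fun k (ω : ∀ i, X i) (j : {i // c i = k}) ↦ ω j) (Measure.infinitePi μ) := by
  rw [iIndepFun_iff_map_fun_eq_infinitePi_map (by fun_prop)]
  have hblock : ∀ k, (Measure.infinitePi μ).map (fun ω (j : {i // c i = k}) ↦ ω j) =
      Measure.infinitePi fun j : {i // c i = k} ↦ μ j :=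
    fun k ↦ Measure.map_infinitePi_infinitePi_of_inj Subtype.val_injective
  have hsnd : Function.Injective fun p : (k : κ) × {i // c i = k} ↦ (p.2 : ι) :=
    (Equiv.sigmaFiberEquiv c).injective
  rw [funext hblock, ← Measure.infinitePi_map_piCurry (fun k (j : {i // c i = k}) ↦ μ j),
    ← Measure.map_infinitePi_infinitePi_of_inj hsnd, Measure.map_map (by fun_prop) (by fun_prop)]
  rfl

theorem iIndepFun_infinitePi_of_dependsOn_fiber {𝓨 : κ → Type*} [∀ k, MeasurableSpace (𝓨 k)]
    (c : ι → κ) {F : ∀ k, (∀ i, X i) → 𝓨 k} (hF : ∀ k, Measurable (F k))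
    (hdep : ∀ k, DependsOn (F k) {i | c i = k}) :
    iIndepFun F (Measure.infinitePi μ) := by
  obtain ⟨ω₀⟩ := nonempty_of_isProbabilityMeasure (Measure.infinitePi μ)
  classical
  let extend (k : κ) (σ : ∀ j : {i // c i = k}, X j) : ∀ i, X i :=
    fun i ↦ if h : c i = k then σ ⟨i, h⟩ else ω₀ i
  have hextend : ∀ k, Measurable (extend k) := fun k ↦ measurable_pi_lambda _ fun i ↦ by
    by_cases h : c i = k
    · simp only [extend, h, dif_pos]; exact measurable_pi_apply _
    · simp only [extend, h, dif_neg, not_false_eq_true]; exact measurable_const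
  have hF_eq : F = fun k ω ↦ F k (extend k fun j ↦ ω j) :=
    funext₂ fun k ω ↦ hdep k fun i (hi : c i = k) ↦ by simp [extend, hi]
  rw [hF_eq]
  exact (iIndepFun_infinitePi_restrict_fiber μ c).comp _ fun k ↦ (hF k).comp (hextend k)

end ProbabilityTheory

lemma one_sub_ofReal_le_of_measureReal_compl_le {Ω : Type*} [MeasurableSpace Ω] {μ : Measure Ω}
    [IsProbabilityMeasure μ] {s : Set Ω} (hs : MeasurableSet s) {b : ℝ} (hb : μ.real sᶜ ≤ b) :
    1 - ENNReal.ofReal b ≤ μ s := by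
  rw [← compl_compl s, prob_compl_eq_one_sub hs.compl]
  exact tsub_le_tsub_left ((ENNReal.le_ofReal_iff_toReal_le (measure_ne_top _ _)
    (measureReal_nonneg.trans hb)).2 hb) 1

lemma two_mul_card_filter_lt_apply_le {α : Type*} [Fintype α] [LinearOrder α] {π : α → α}
    (hπ : Function.Involutive π) : 2 * #{k | k < π k} ≤ Fintype.card α := by
  set s : Finset α := {k | k < π k}
  have hdisj : Disjoint s (s.image π) := by
    simp only [s, disjoint_left, mem_image, mem_filter, mem_univ, true_and]
    rintro k hk ⟨j, hj, rfl⟩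
    exact lt_asymm hk (by rwa [hπ j])
  calc 2 * #s = #(s ∪ s.image π) := by
        rw [card_union_of_disjoint hdisj, card_image_of_injective _ hπ.injective, two_mul]
    _ ≤ Fintype.card α := card_le_univ _

section BipRandomGraph

variable {n : ℕ}

def commonNeighborCount (ω : (Fin n × Fin n) → Bool) (a a' : Fin n) : ℕ :=
  #{b | ω (a, b) = true ∧ ω (a', b) = true}

def matchedBadEvent (π : Fin n → Fin n) (k : Fin n) : Set ((Fin n × Fin n) → Bool) :=
  {ω | k < π k ∧ 5 ≤ commonNeighborCount ω k (π k)}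

def matchedBadCount (π : Fin n → Fin n) (ω : (Fin n × Fin n) → Bool) : ℕ :=
  #{k | k < π k ∧ 5 ≤ commonNeighborCount ω k (π k)}

lemma matchedBadCount_eq_sum_indicator (π : Fin n → Fin n) (ω : (Fin n × Fin n) → Bool) :
    (matchedBadCount π ω : ℝ) = ∑ k ∈ {k | k < π k}, (matchedBadEvent π k).indicator 1 ω := by
  rw [matchedBadCount, card_filter, Nat.cast_sum, sum_filter]
  refine sum_congr rfl fun k _ ↦ ?_
  by_cases hk : k < π k <;> simp [matchedBadEvent, Set.indicator_apply, hk]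

lemma badPairCount_eq_zero_of_le_one (hn : n ≤ 1) (ω : (Fin n × Fin n) → Bool) :
    badPairCount n ω = 0 := by
  refine card_eq_zero.2 (filter_eq_empty_iff.2 fun P _ hP ↦ ?_)
  have := P.card_le_univ
  simp only [Fintype.card_fin] at this
  omega

lemma badPairCount_le_sum_matchedBadCount [NeZero n] (ω : (Fin n × Fin n) → Bool) :
    badPairCount n ω ≤ ∑ r : Fin n, matchedBadCount (r - ·) ω := by
  calc badPairCount n ω
      ≤ #{q : Fin n × Fin n | q.2 < q.1 - q.2 ∧ 5 ≤ commonNeighborCount ω q.2 (q.1 - q.2)} := by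
        refine card_le_card_of_surjOn (fun q ↦ {q.2, q.1 - q.2}) ?_
        intro P hP
        simp only [coe_filter, mem_univ, true_and, Set.mem_ofPred_eq] at hP
        obtain ⟨hcard, hbad⟩ := hP
        obtain ⟨x, y, hxy, rfl⟩ := card_eq_two.1 hcard
        simp only [forall_mem_insert, mem_singleton, forall_eq] at hbad
        rcases hxy.lt_or_gt with h | h
        · refine ⟨(x + y, x), ?_, by simp⟩
          rw [mem_coe, mem_filter, add_sub_cancel_left]
          exact ⟨mem_univ _, h, hbad⟩
        · refine ⟨(x + y, y), ?_, by simp [pair_comm]⟩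
          rw [mem_coe, mem_filter, add_sub_cancel_right]
          exact ⟨mem_univ _, h, by simpa only [commonNeighborCount, and_comm] using hbad⟩
    _ = ∑ r : Fin n, matchedBadCount (r - ·) ω := by
        simp only [matchedBadCount, card_filter, Fintype.sum_prod_type]

variable {p : ENNReal} (hp : p ≤ 1)

instance : IsProbabilityMeasure (bipRandomGraph n p hp) := by
  unfold bipRandomGraph; infer_instance

lemma bipRandomGraph_edge_present (x : Fin n × Fin n) :
    bipRandomGraph n p hp {ω | ω x = true} = p := by
  rw [show {ω : (Fin n × Fin n) → Bool | ω x = true} = Function.eval x ⁻¹' ({true} : Set Bool)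
    from rfl, bipRandomGraph,
    (measurePreserving_eval _ x).measure_preimage (measurableSet_singleton _).nullMeasurableSet,
    PMF.toMeasure_apply_singleton _ _ (measurableSet_singleton _)]
  exact (PMF.bernoulli_apply _ true).trans
    (ENNReal.coe_toNNReal (ne_top_of_le_ne_top ENNReal.one_ne_top hp))

lemma bipRandomGraph_real_two_edges_present {x y : Fin n × Fin n} (hxy : x ≠ y) :
    (bipRandomGraph n p hp).real {ω | ω x = true ∧ ω y = true} = p.toReal ^ 2 := by
  have hindep : iIndepFun (fun c (ω : (Fin n × Fin n) → Bool) ↦ ω c) (bipRandomGraph n p hp) :=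
    iIndepFun_pi (X := fun _ ↦ id) fun _ ↦ aemeasurable_id
  have hprod := hindep.measure_inter_preimage_eq_mul {x, y} (sets := fun _ ↦ {true})
    fun _ _ ↦ measurableSet_singleton _
  simp only [prod_pair hxy, mem_insert, mem_singleton, Set.iInter_iInter_eq_or_left,
    Set.iInter_iInter_eq_left] at hprod
  rw [measureReal_def, show {ω : (Fin n × Fin n) → Bool | ω x = true ∧ ω y = true} =
    (fun ω ↦ ω x) ⁻¹' {true} ∩ (fun ω ↦ ω y) ⁻¹' {true} from rfl, hprod]
  change (bipRandomGraph n p hp {ω | ω x = true} *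
    bipRandomGraph n p hp {ω | ω y = true}).toReal = _
  rw [bipRandomGraph_edge_present, bipRandomGraph_edge_present, ENNReal.toReal_mul, sq]

lemma integral_commonNeighborCount {a a' : Fin n} (haa' : a ≠ a') :
    ∫ ω, (commonNeighborCount ω a a' : ℝ) ∂bipRandomGraph n p hp = n * p.toReal ^ 2 := by
  have hcount : ∀ ω, (commonNeighborCount ω a a' : ℝ) =
      ∑ b, {ω : (Fin n × Fin n) → Bool | ω (a, b) = true ∧ ω (a', b) = true}.indicator 1 ω := by
    intro ω
    simp [commonNeighborCount, Set.indicator_apply]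
  simp_rw [hcount]
  rw [integral_finsetSum _ fun _ _ ↦ Integrable.of_finite]
  simp_rw [integral_indicator_one MeasurableSet.of_discrete,
    bipRandomGraph_real_two_edges_present hp (x := (a, _)) (y := (a', _)) (by simp [haa'])]
  simp

lemma measureReal_five_le_commonNeighborCount_le {a a' : Fin n} (haa' : a ≠ a') :
    (bipRandomGraph n p hp).real {ω | 5 ≤ commonNeighborCount ω a a'} ≤ n * p.toReal ^ 2 / 5 := by
  have := mul_meas_ge_le_integral_of_nonneg (μ := bipRandomGraph n p hp)
    (ae_of_all _ fun ω ↦ (commonNeighborCount ω a a').cast_nonneg) Integrable.of_finite 5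
  rw [integral_commonNeighborCount hp haa'] at this
  simp only [Nat.ofNat_le_cast] at this
  linarith

lemma iIndepFun_indicator_matchedBadEvent {π : Fin n → Fin n} (hπ : Function.Involutive π) :
    iIndepFun (fun k ↦ (matchedBadEvent π k).indicator (1 : ((Fin n × Fin n) → Bool) → ℝ))
      (bipRandomGraph n p hp) := by
  rw [bipRandomGraph, ← Measure.infinitePi_eq_pi]
  refine iIndepFun_infinitePi_of_dependsOn_fiber _ (fun e : Fin n × Fin n ↦ min e.1 (π e.1))
    (fun _ ↦ Measurable.of_discrete) fun k ω ω' h ↦ ?_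
  by_cases hk : k < π k
  · have hrows : ∀ b, ω (k, b) = ω' (k, b) ∧ ω (π k, b) = ω' (π k, b) := fun b ↦
      ⟨h _ (min_eq_left hk.le), h _ (by simp [hπ k, min_eq_right hk.le])⟩
    simp [matchedBadEvent, commonNeighborCount, Set.indicator_apply, hrows]
  · simp [matchedBadEvent, hk]

lemma measureReal_matchedBadCount_ge_le {π : Fin n → Fin n} (hπ : Function.Involutive π)
    {ε : ℝ} (hε : 0 ≤ ε) :
    (bipRandomGraph n p hp).real {ω | n * (n * p.toReal ^ 2) / 10 + ε ≤ matchedBadCount π ω} ≤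
      Real.exp (-(4 * ε ^ 2 / n)) := by
  set μ := bipRandomGraph n p hp
  set s : Finset (Fin n) := {k | k < π k}
  set Y : Fin n → ((Fin n × Fin n) → Bool) → ℝ := fun k ↦ (matchedBadEvent π k).indicator 1
  have hs : 2 * (#s : ℝ) ≤ n := by
    exact_mod_cast (two_mul_card_filter_lt_apply_le hπ).trans_eq (Fintype.card_fin n)
  have hmean : ∑ k ∈ s, μ[Y k] ≤ n * (n * p.toReal ^ 2) / 10 := by
    calc ∑ k ∈ s, μ[Y k] ≤ ∑ _k ∈ s, n * p.toReal ^ 2 / 5 := sum_le_sum fun k hk ↦ by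
          rw [integral_indicator_one MeasurableSet.of_discrete]
          exact (measureReal_mono fun ω hω ↦ hω.2).trans
            (measureReal_five_le_commonNeighborCount_le hp (mem_filter.1 hk).2.ne)
      _ ≤ n * (n * p.toReal ^ 2) / 10 := by
          rw [sum_const, nsmul_eq_mul]
          nlinarith [show 0 ≤ (n : ℝ) * p.toReal ^ 2 by positivity]
  have hindep : iIndepFun (fun k ω ↦ Y k ω - μ[Y k]) μ :=
    (iIndepFun_indicator_matchedBadEvent hp hπ).comp _ fun _ ↦ measurable_id.sub_const _
  have hsubG : HasSubgaussianMGF (fun ω ↦ ∑ k ∈ s, (Y k ω - μ[Y k])) (n / 8) μ := by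
    refine (HasSubgaussianMGF.sum_of_iIndepFun hindep (c := fun _ ↦ (‖(1 : ℝ) - 0‖₊ / 2) ^ 2)
      fun k _ ↦ hasSubgaussianMGF_of_mem_Icc Measurable.of_discrete.aemeasurable
        (ae_of_all _ fun ω ↦ ?_)).mono ?_
    · exact ⟨Set.indicator_nonneg (fun _ _ ↦ zero_le_one) ω,
        Set.indicator_le_self' (fun _ _ ↦ zero_le_one) ω⟩
    · rw [← NNReal.coe_le_coe]
      push_cast
      simp only [sum_const, nsmul_eq_mul, sub_zero, norm_one]
      linarith
  calc μ.real {ω | n * (n * p.toReal ^ 2) / 10 + ε ≤ matchedBadCount π ω}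
      ≤ μ.real {ω | ε ≤ ∑ k ∈ s, (Y k ω - μ[Y k])} := measureReal_mono fun ω hω ↦ by
        simp only [Set.mem_ofPred_eq, matchedBadCount_eq_sum_indicator] at hω ⊢
        rw [sum_sub_distrib]
        linarith
    _ ≤ Real.exp (-ε ^ 2 / (2 * ((n : NNReal) / 8 : NNReal))) := hsubG.measure_ge_le hε
    _ = Real.exp (-(4 * ε ^ 2 / n)) := by
        push_cast
        ring_nf

lemma measureReal_badPairCount_gt_le [NeZero n] {ε : ℝ} (hε : 0 ≤ ε) :
    (bipRandomGraph n p hp).real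
        {ω | n * (n * (n * p.toReal ^ 2) / 10 + ε) < badPairCount n ω} ≤
      n * Real.exp (-(4 * ε ^ 2 / n)) := by
  set t := n * (n * p.toReal ^ 2) / 10 + ε
  have hcover : {ω | n * t < badPairCount n ω} ⊆
      ⋃ r : Fin n, {ω | t ≤ matchedBadCount (r - ·) ω} := fun ω hω ↦ by
    by_contra hcov
    simp only [Set.mem_iUnion, Set.mem_ofPred_eq, not_exists, not_le] at hω hcov
    have hsum : (badPairCount n ω : ℝ) ≤ ∑ r : Fin n, (matchedBadCount (r - ·) ω : ℝ) := by
      exact_mod_cast badPairCount_le_sum_matchedBadCount ω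
    have := sum_le_sum fun r (_ : r ∈ univ) ↦ (hcov r).le
    simp only [sum_const, card_univ, Fintype.card_fin, nsmul_eq_mul] at this
    linarith
  calc (bipRandomGraph n p hp).real {ω | n * t < badPairCount n ω}
      ≤ ∑ r : Fin n, (bipRandomGraph n p hp).real {ω | t ≤ matchedBadCount (r - ·) ω} :=
        (measureReal_mono hcover).trans (measureReal_iUnion_fintype_le _)
    _ ≤ ∑ _r : Fin n, Real.exp (-(4 * ε ^ 2 / n)) := sum_le_sum fun r _ ↦
        measureReal_matchedBadCount_ge_le hp (fun i ↦ sub_sub_cancel r i) hε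
    _ = n * Real.exp (-(4 * ε ^ 2 / n)) := by simp

end BipRandomGraph

theorem few_pairs_with_many_common_neighbors_general (n : ℕ) (δ : ℝ) (hδ : 0 < δ) :
    1 - ENNReal.ofReal (((n - 1 : ℕ) : ℝ) * 2 * Real.exp (-(δ ^ 2) * n / 30)) ≤
      bipRandomGraph n (ENNReal.ofReal (1 / Real.sqrt n)) (ofReal_one_div_sqrt_le_one n)
        {ω | (badPairCount n ω : ℝ) ≤ (1 + δ) * (n : ℝ) ^ 2 / 10} := by
  rcases le_or_gt n 1 with hn | hn
  · have hall : {ω | (badPairCount n ω : ℝ) ≤ (1 + δ) * (n : ℝ) ^ 2 / 10} = Set.univ :=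
      Set.eq_univ_of_forall fun ω ↦ by
        rw [Set.mem_ofPred_eq, badPairCount_eq_zero_of_le_one hn, Nat.cast_zero]
        positivity
    rw [hall, measure_univ]
    exact tsub_le_self
  have : NeZero n := ⟨by omega⟩
  have hnp : (n : ℝ) * (ENNReal.ofReal (1 / Real.sqrt n)).toReal ^ 2 = 1 := by
    rw [ENNReal.toReal_ofReal (by positivity), div_pow, Real.sq_sqrt n.cast_nonneg]
    field_simp
  have hbad := measureReal_badPairCount_gt_le (n := n) (ofReal_one_div_sqrt_le_one n)
    (ε := δ * n / 10) (by positivity)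
  rw [hnp, show (n : ℝ) * (n * 1 / 10 + δ * n / 10) = (1 + δ) * n ^ 2 / 10 by ring] at hbad
  refine one_sub_ofReal_le_of_measureReal_compl_le MeasurableSet.of_discrete ?_
  simp only [Set.compl_ofPred, not_le]
  refine hbad.trans ?_
  have hn' : (n : ℝ) ≤ ((n - 1 : ℕ) : ℝ) * 2 := by exact_mod_cast (by omega : n ≤ (n - 1) * 2)
  have hn0 : (0 : ℝ) < n := by positivity
  gcongr
  field_simp
  nlinarith [sq_nonneg δ]

/-- in `G(n, n, 1/√n)` with `n` even, for every constant `δ > 0`, with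
probability at least `1 − (n−1)·2·exp(−δ²n/30)`, the number of pairs of distinct left
vertices having at least 5 common neighbors is at most `(1+δ)·n²/10`. -/
theorem few_pairs_with_many_common_neighbors (n : ℕ) (hn : Even n) (δ : ℝ) (hδ : 0 < δ) :
    1 - ENNReal.ofReal (((n - 1 : ℕ) : ℝ) * 2 * Real.exp (-(δ ^ 2) * n / 30)) ≤
      bipRandomGraph n (ENNReal.ofReal (1 / Real.sqrt n)) (ofReal_one_div_sqrt_le_one n)
        {ω | (badPairCount n ω : ℝ) ≤ (1 + δ) * (n : ℝ) ^ 2 / 10} :=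
  few_pairs_with_many_common_neighbors_general n δ hδ
end

section
/- Let G = (A, B, E) be a (k,m)-lower-bound graph with clique-cover sets E_1, ..., E_k and associated bipartite graphs H_A, H_B. Given X, Y ∈ {0,1}^k, form G' by adding, for each i with X_i = 1, the H_A-edge joining the pair A(E_i), and for each i with Y_i = 1, the H_B-edge joining B(E_i). Then G' contains a copy of K_4 if and only if there exists an index i with X_i = Y_i = 1. -/
/-!
In `G'` the only edges inside `A` are activated pairs `fA i`, so a clique of `G'` inside `A` is a
clique of the bipartite graph `H_A` and has at most two vertices; likewise in `B`. A `K_4` in `G'`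
therefore consists of an activated pair `fA i` and an activated pair `fB j`, joined by all four
edges of `G`, and condition (i) forces `i = j`. Conversely `fA i ∪ fB i` is a `K_4` whenever both
pairs are activated.
-/

open Finset SimpleGraph

theorem Finset.eq_pair_of_card_eq_two {V : Type*} [DecidableEq V] {s : Finset V} {u v : V}
    (hs : #s = 2) (hu : u ∈ s) (hv : v ∈ s) (huv : u ≠ v) : s = {u, v} :=
  (eq_of_subset_of_card_le (insert_subset hu (singleton_subset_iff.mpr hv))
    (by rw [hs, card_pair huv])).symm

theorem SimpleGraph.IsClique.subset_of_adj_imp_mem {V : Type*} {G : SimpleGraph V}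
    {s T : Finset V} (hs : G.IsClique (s : Set V)) (hcard : 1 < #s)
    (hT : ∀ ⦃u v⦄, G.Adj u v → u ∈ T) : s ⊆ T := by
  intro u hu
  obtain ⟨v, hv, hvu⟩ := exists_mem_ne hcard u
  exact hT (hs hu hv hvu.symm)

namespace LowerBoundGraph

variable {V : Type*} {k : ℕ} {G : SimpleGraph V} {fA fB : Fin k → Finset V} {A B : Finset V}

theorem isBipartiteWith_of_adj_iff (hAB : Disjoint A B) (hfA : ∀ i, fA i ⊆ A)
    (hfB : ∀ i, fB i ⊆ B)
    (hedges : ∀ u v, G.Adj u v ↔ ∃ i, (u ∈ fA i ∧ v ∈ fB i) ∨ (u ∈ fB i ∧ v ∈ fA i)) :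
    G.IsBipartiteWith A B where
  disjoint := disjoint_coe.mpr hAB
  mem_of_adj u v h := by
    obtain ⟨i, ⟨hu, hv⟩ | ⟨hu, hv⟩⟩ := (hedges u v).mp h
    · exact Or.inl ⟨hfA i hu, hfB i hv⟩
    · exact Or.inr ⟨hfB i hu, hfA i hv⟩

variable [DecidableEq V]

/-- The graph `H_A` (for `f = fA`) or `H_B` (for `f = fB`). -/
def pairGraph (f : Fin k → Finset V) : SimpleGraph V :=
  SimpleGraph.fromRel fun u v => ∃ i, f i = {u, v}

/-- The graph `G'`. -/
def augment (G : SimpleGraph V) (fA fB : Fin k → Finset V) (X Y : Fin k → Bool) :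
    SimpleGraph V :=
  SimpleGraph.fromRel fun u v =>
    G.Adj u v ∨ (∃ i, X i = true ∧ fA i = {u, v}) ∨ (∃ i, Y i = true ∧ fB i = {u, v})

variable {X Y : Fin k → Bool} {S : Finset V} {u v : V}

theorem augment_adj : (augment G fA fB X Y).Adj u v ↔ u ≠ v ∧
    (G.Adj u v ∨ (∃ i, X i = true ∧ fA i = {u, v}) ∨ (∃ i, Y i = true ∧ fB i = {u, v})) := by
  simp only [augment, fromRel_adj, G.adj_comm v u, pair_comm v u, or_self]

theorem augment_comm : augment G fA fB X Y = augment G fB fA Y X := by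
  ext u v
  simp only [augment_adj]
  exact and_congr_right fun _ => or_congr_right or_comm

theorem mem_union_of_augment_adj (hG : G.IsBipartiteWith A B) (hfA : ∀ i, fA i ⊆ A)
    (hfB : ∀ i, fB i ⊆ B) (h : (augment G fA fB X Y).Adj u v) : u ∈ A ∪ B := by
  obtain ⟨-, hG' | ⟨i, -, hi⟩ | ⟨i, -, hi⟩⟩ := augment_adj.mp h
  · obtain ⟨hu, -⟩ | ⟨hu, -⟩ := hG.mem_of_adj hG'
    · exact mem_union_left _ hu
    · exact mem_union_right _ hu
  · exact mem_union_left _ (hfA i (hi ▸ mem_insert_self u {v}))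
  · exact mem_union_right _ (hfB i (hi ▸ mem_insert_self u {v}))

theorem exists_eq_pair_of_augment_adj (hG : G.IsBipartiteWith A B) (hfB : ∀ i, fB i ⊆ B)
    (hu : u ∈ A) (hv : v ∈ A) (h : (augment G fA fB X Y).Adj u v) :
    ∃ i, X i = true ∧ fA i = {u, v} := by
  have hAB : Disjoint A B := disjoint_coe.mp hG.disjoint
  obtain ⟨-, hG' | hX | ⟨i, -, hi⟩⟩ := augment_adj.mp h
  · obtain ⟨-, hv'⟩ | ⟨hu', -⟩ := hG.mem_of_adj hG'
    · exact absurd hv' (disjoint_left.mp hAB hv)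
    · exact absurd hu' (disjoint_left.mp hAB hu)
  · exact hX
  · exact absurd (hfB i (hi ▸ mem_insert_self u {v})) (disjoint_left.mp hAB hu)

theorem adj_of_augment_adj (hG : G.IsBipartiteWith A B) (hfA : ∀ i, fA i ⊆ A)
    (hfB : ∀ i, fB i ⊆ B) (hu : u ∈ A) (hv : v ∈ B) (h : (augment G fA fB X Y).Adj u v) :
    G.Adj u v := by
  have hAB : Disjoint A B := disjoint_coe.mp hG.disjoint
  obtain ⟨-, hG' | ⟨i, -, hi⟩ | ⟨i, -, hi⟩⟩ := augment_adj.mp h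
  · exact hG'
  · exact absurd hv
      (disjoint_left.mp hAB (hfA i (hi ▸ mem_insert_of_mem (mem_singleton_self v))))
  · exact absurd (hfB i (hi ▸ mem_insert_self u {v})) (disjoint_left.mp hAB hu)

theorem isClique_pairGraph (hG : G.IsBipartiteWith A B) (hfB : ∀ i, fB i ⊆ B) (hSA : S ⊆ A)
    (hS : (augment G fA fB X Y).IsClique (S : Set V)) : (pairGraph fA).IsClique (S : Set V) := by
  intro u hu v hv huv
  obtain ⟨i, -, hi⟩ := exists_eq_pair_of_augment_adj hG hfB (hSA hu) (hSA hv) (hS hu hv huv)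
  exact ⟨huv, Or.inl ⟨i, hi⟩⟩

theorem card_le_two_of_isClique (hG : G.IsBipartiteWith A B) (hfB : ∀ i, fB i ⊆ B)
    (hHA : (pairGraph fA).Colorable 2) (hSA : S ⊆ A)
    (hS : (augment G fA fB X Y).IsClique (S : Set V)) : #S ≤ 2 :=
  (isClique_pairGraph hG hfB hSA hS).card_le_of_colorable hHA

theorem exists_eq_of_isClique_of_card_eq_two (hG : G.IsBipartiteWith A B)
    (hfB : ∀ i, fB i ⊆ B) (hSA : S ⊆ A) (hS : (augment G fA fB X Y).IsClique (S : Set V))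
    (h2 : #S = 2) : ∃ i, X i = true ∧ fA i = S := by
  obtain ⟨u, v, huv, rfl⟩ := card_eq_two.mp h2
  have hu : u ∈ ({u, v} : Finset V) := mem_insert_self u {v}
  have hv : v ∈ ({u, v} : Finset V) := mem_insert_of_mem (mem_singleton_self v)
  exact exists_eq_pair_of_augment_adj hG hfB (hSA hu) (hSA hv) (hS hu hv huv)

theorem exists_of_isClique_of_card_eq_four (hG : G.IsBipartiteWith A B)
    (hfA : ∀ i, fA i ⊆ A) (hfB : ∀ i, fB i ⊆ B)
    (hnotK22 : ∀ i j, i ≠ j → ¬ ∀ a ∈ fA i, ∀ b ∈ fB j, G.Adj a b)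
    (hHA : (pairGraph fA).Colorable 2) (hHB : (pairGraph fB).Colorable 2)
    (hS : (augment G fA fB X Y).IsClique (S : Set V)) (h4 : #S = 4) :
    ∃ i, X i = true ∧ Y i = true := by
  have hAB : Disjoint A B := disjoint_coe.mp hG.disjoint
  have hSAB : S ⊆ A ∪ B :=
    hS.subset_of_adj_imp_mem (by omega) fun _ _ => mem_union_of_augment_adj hG hfA hfB
  have hSA : (augment G fA fB X Y).IsClique ((S ∩ A : Finset V) : Set V) :=
    hS.subset (coe_subset.mpr inter_subset_left)
  have hSB : (augment G fB fA Y X).IsClique ((S ∩ B : Finset V) : Set V) :=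
    augment_comm (G := G) ▸ hS.subset (coe_subset.mpr inter_subset_left)
  have hsplit : #(S ∩ A) + #(S ∩ B) = 4 := by
    rw [← card_union_of_disjoint (hAB.mono inter_subset_right inter_subset_right),
      ← inter_union_distrib_left, inter_eq_left.mpr hSAB, h4]
  have hA := card_le_two_of_isClique hG hfB hHA inter_subset_right hSA
  have hB := card_le_two_of_isClique hG.symm hfA hHB inter_subset_right hSB
  obtain ⟨i, hXi, hi⟩ :=
    exists_eq_of_isClique_of_card_eq_two hG hfB inter_subset_right hSA (by omega)
  obtain ⟨j, hYj, hj⟩ :=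
    exists_eq_of_isClique_of_card_eq_two hG.symm hfA inter_subset_right hSB (by omega)
  obtain rfl : i = j := by
    by_contra hij
    refine hnotK22 i j hij fun a ha b hb => ?_
    rw [hi, mem_inter] at ha
    rw [hj, mem_inter] at hb
    exact adj_of_augment_adj hG hfA hfB ha.2 hb.2
      (hS ha.1 hb.1 (disjoint_iff_ne.mp hAB a ha.2 b hb.2))
  exact ⟨i, hXi, hYj⟩

theorem isClique_augment_union {i : Fin k} (hX : X i = true) (hY : Y i = true)
    (hA2 : #(fA i) = 2) (hB2 : #(fB i) = 2) (hcross : ∀ a ∈ fA i, ∀ b ∈ fB i, G.Adj a b) :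
    (augment G fA fB X Y).IsClique ((fA i ∪ fB i : Finset V) : Set V) := by
  intro u hu v hv huv
  rw [coe_union, Set.mem_union, mem_coe, mem_coe] at hu hv
  refine augment_adj.mpr ⟨huv, ?_⟩
  rcases hu with hu | hu <;> rcases hv with hv | hv
  · exact Or.inr (Or.inl ⟨i, hX, eq_pair_of_card_eq_two hA2 hu hv huv⟩)
  · exact Or.inl (hcross u hu v hv)
  · exact Or.inl (hcross v hv u hu).symm
  · exact Or.inr (Or.inr ⟨i, hY, eq_pair_of_card_eq_two hB2 hu hv huv⟩)

end LowerBoundGraph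

open LowerBoundGraph in
/-- let `G` be a `(k, m)`-lower-bound graph with `K_{2,2}`-cover sets
`E_1, …, E_k`, where `E_i` is the complete bipartite graph between the pair `fA i ⊆ A`
and the pair `fB i ⊆ B`. Given `X Y : {0,1}^k`, form `G'` by adding for each `i` with
`X i = 1` the edge joining the pair `fA i`, and for each `i` with `Y i = 1` the edge
joining the pair `fB i`. Then `G'` contains a copy of `K_4` iff `X i = Y i = 1` for
some `i`. -/
theorem lower_bound_graph_K4_iff_disj {V : Type*} [DecidableEq V] (k : ℕ)
    (A B : Finset V) (hAB : Disjoint A B)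
    (G : SimpleGraph V) (fA fB : Fin k → Finset V)
    (hfA : ∀ i, fA i ⊆ A ∧ (fA i).card = 2)
    (hfB : ∀ i, fB i ⊆ B ∧ (fB i).card = 2)
    -- the edge set of `G` is the union of the `E_i`, each a `K_{2,2}` between `fA i` and `fB i`
    (hedges : ∀ u v, G.Adj u v ↔
      ∃ i, (u ∈ fA i ∧ v ∈ fB i) ∨ (u ∈ fB i ∧ v ∈ fA i))
    -- for `i ≠ j`, the induced subgraph `G[A(E_i) ∪ B(E_j)]` is not a `K_{2,2}`
    (hnotK22 : ∀ i j, i ≠ j → ¬ ∀ a ∈ fA i, ∀ b ∈ fB j, G.Adj a b)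
    -- the associated graphs `H_A` and `H_B` are bipartite
    (hHA : (SimpleGraph.fromRel fun u v => ∃ i, fA i = {u, v}).Colorable 2)
    (hHB : (SimpleGraph.fromRel fun u v => ∃ i, fB i = {u, v}).Colorable 2)
    (X Y : Fin k → Bool) :
    (∃ S : Finset V, S.card = 4 ∧
        (SimpleGraph.fromRel fun u v =>
          G.Adj u v ∨ (∃ i, X i = true ∧ fA i = {u, v}) ∨
            (∃ i, Y i = true ∧ fB i = {u, v})).IsClique (S : Set V)) ↔
      ∃ i, X i = true ∧ Y i = true := by
  have hG := isBipartiteWith_of_adj_iff hAB (fun i => (hfA i).1) (fun i => (hfB i).1) hedges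
  constructor
  · rintro ⟨S, h4, hS⟩
    exact exists_of_isClique_of_card_eq_four hG (fun i => (hfA i).1) (fun i => (hfB i).1)
      hnotK22 hHA hHB hS h4
  · rintro ⟨i, hX, hY⟩
    refine ⟨fA i ∪ fB i, ?_, isClique_augment_union hX hY (hfA i).2 (hfB i).2
      fun a ha b hb => (hedges a b).mpr ⟨i, Or.inl ⟨ha, hb⟩⟩⟩
    rw [card_union_of_disjoint (hAB.mono (hfA i).1 (hfB i).1), (hfA i).2, (hfB i).2]
end
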